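/- Let X be a compact Hausdorff space with a continuous semigroup action α of S that is expansive, minimal, and has the pseudo-orbit tracing property. Then there exists a finite K ⊆ S and entourage W of X such that for every continuous action β of S on X with (α_k(x), β_k(x)) ∈ W for all k ∈ K, x ∈ X, there exists a continuous surjective map h : X → X with α_s ∘ h = h ∘ β_s for all s ∈ S (i.e., α is a factor of β). -/

import Mathlib

/-!
Shrink an expansivity constant to a closed entourage `U` such that an `α`-orbit that stays
`U`-close to a given family of points is unique. The pseudo-orbit tracing property then
provides a `V` such that every `β` that is `V`-close to `α` on `K` has all its orbits
`U`-traced by `α`-orbits; sending `x` to the unique point tracing its `β`-orbit gives `h`.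
Uniqueness makes `h` equivariant, closedness of `U` makes its graph closed (hence `h` is
continuous, the target being compact), and minimality makes its closed range everything.
-/

open Uniformity

theorem continuous_of_isClosed_graph_of_compactSpace {X Y : Type*} [TopologicalSpace X]
    [TopologicalSpace Y] [CompactSpace X] {f : Y → X}
    (hf : IsClosed {p : X × Y | p.1 = f p.2}) : Continuous f := by
  refine continuous_iff_isClosed.2 fun C hC => ?_
  have hpre : f ⁻¹' C = Prod.snd '' ({p : X × Y | p.1 = f p.2} ∩ C ×ˢ Set.univ) := by
    ext y
    constructor
    · intro hy
      exact ⟨(f y, y), ⟨rfl, hy, trivial⟩, rfl⟩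
    · rintro ⟨⟨x, y⟩, ⟨hxy, hx, -⟩, rfl⟩
      exact (show x = f y from hxy) ▸ hx
  rw [hpre]
  exact isClosedMap_snd_of_compactSpace _ (hf.inter (hC.prod isClosed_univ))

section Tracing

variable {S X : Type*} (α : S → X → X)

def TracingUnique (U : SetRel X X) : Prop :=
  ∀ (f : S → X) (z z' : X),
    (∀ s, (α s z, f s) ∈ U) → (∀ s, (α s z', f s) ∈ U) → z = z'

theorem exists_isClosed_tracingUnique [UniformSpace X] {E : SetRel X X}
    (hE : E ∈ 𝓤 X) (hexp : ∀ x y : X, x ≠ y → ∃ s : S, (α s x, α s y) ∉ E) :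
    ∃ U ∈ 𝓤 X, IsClosed U ∧ TracingUnique α U := by
  obtain ⟨T, hT, hTsymm, hTE⟩ := comp_symm_mem_uniformity_sets hE
  obtain ⟨U, ⟨hU, hUclosed⟩, hUT⟩ := uniformity_hasBasis_closed.mem_iff.1 hT
  refine ⟨U, hU, hUclosed, fun f z z' hz hz' => ?_⟩
  by_contra hne
  obtain ⟨s, hs⟩ := hexp z z' hne
  exact hs (hTE ⟨f s, hUT (hz s), SetRel.symm T (hUT (hz' s))⟩)

theorem semiconj_of_tracingUnique [Semigroup S] (β : S → X → X) {U : SetRel X X}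
    (hα : ∀ (s t : S) (x : X), α (s * t) x = α s (α t x))
    (hβ : ∀ (s t : S) (y : X), β (s * t) y = β s (β t y))
    (huniq : TracingUnique α U)
    {h : X → X} (hh : ∀ y s, (α s (h y), β s y) ∈ U) (t : S) (y : X) :
    α t (h y) = h (β t y) := by
  refine huniq (fun s => β s (β t y)) _ _ (fun s => ?_) (hh (β t y))
  rw [← hα, ← hβ]
  exact hh y (s * t)

theorem continuous_of_tracingUnique [UniformSpace X] [CompactSpace X] (β : S → X → X)
    {U : SetRel X X} (hU : IsClosed U) (hαc : ∀ s, Continuous (α s))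
    (hβc : ∀ s, Continuous (β s))
    (huniq : TracingUnique α U)
    {h : X → X} (hh : ∀ y s, (α s (h y), β s y) ∈ U) : Continuous h := by
  have hgraph : {p : X × X | p.1 = h p.2} = ⋂ s, (fun p => (α s p.1, β s p.2)) ⁻¹' U := by
    ext ⟨x, y⟩
    simp only [Set.mem_ofPred_eq, Set.mem_iInter, Set.mem_preimage]
    exact ⟨fun hx s => hx ▸ hh y s, fun hx => huniq _ _ _ hx (hh y)⟩
  refine continuous_of_isClosed_graph_of_compactSpace ?_
  rw [hgraph]
  exact isClosed_iInter fun s =>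
    hU.preimage (((hαc s).comp continuous_fst).prodMk ((hβc s).comp continuous_snd))

theorem surjective_of_semiconj_of_dense_orbit {Y : Type*} (β : S → Y → Y) [TopologicalSpace X]
    [T2Space X] [TopologicalSpace Y] [CompactSpace Y] {h : Y → X} (hc : Continuous h)
    (hcomm : ∀ s y, α s (h y) = h (β s y)) (y₀ : Y)
    (hdense : Dense {x : X | ∃ s : S, x = α s (h y₀)}) : Function.Surjective h := by
  have horbit : {x : X | ∃ s : S, x = α s (h y₀)} ⊆ Set.range h := by
    rintro x ⟨s, rfl⟩
    exact ⟨β s y₀, (hcomm s y₀).symm⟩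
  refine Set.range_eq_univ.1 (Set.eq_univ_of_univ_subset ?_)
  rw [← hdense.closure_eq]
  exact closure_minimal horbit (isCompact_range hc).isClosed

end Tracing

/-- If `α` is an expansive, minimal continuous semigroup action with the pseudo-orbit
tracing property, then there exist a finite `K ⊆ S` and an entourage `W` such that `α` is
a factor of every continuous action `β` with `(α_k x, β_k x) ∈ W` for all `k ∈ K`,
`x ∈ X`: there is a continuous surjection `h : X → X` with `α_s ∘ h = h ∘ β_s`. -/
theorem stmt_5 {S X : Type*} [Semigroup S] [UniformSpace X] [CompactSpace X] [T2Space X]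
    (α : S → X → X) (hαact : ∀ (s t : S) (x : X), α (s * t) x = α s (α t x))
    (hαcont : ∀ s : S, Continuous (α s))
    (hexp : ∃ E ∈ uniformity X, ∀ x y : X, x ≠ y → ∃ s : S, (α s x, α s y) ∉ E)
    (hmin : ∀ x : X, Dense {y : X | ∃ s : S, y = α s x})
    (hpotp : ∀ U ∈ uniformity X, ∃ K : Finset S, ∃ V ∈ uniformity X,
        ∀ xs : S → X, (∀ k ∈ K, ∀ s : S, (α k (xs s), xs (k * s)) ∈ V) →
          ∃ x : X, ∀ s : S, (α s x, xs s) ∈ U) :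
    ∃ K : Finset S, ∃ W ∈ uniformity X,
      ∀ β : S → X → X, (∀ (s t : S) (x : X), β (s * t) x = β s (β t x)) →
        (∀ s : S, Continuous (β s)) →
        (∀ k ∈ K, ∀ x : X, (α k x, β k x) ∈ W) →
        ∃ h : X → X, Function.Surjective h ∧ Continuous h ∧
          ∀ (s : S) (x : X), α s (h x) = h (β s x) := by
  obtain ⟨E, hE, hEexp⟩ := hexp
  obtain ⟨U, hU, hUclosed, huniq⟩ := exists_isClosed_tracingUnique α hE hEexp
  obtain ⟨K, V, hV, htrace⟩ := hpotp U hU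
  refine ⟨K, V, hV, fun β hβact hβcont hβclose => ?_⟩
  have hpseudo : ∀ x, ∀ k ∈ K, ∀ s, (α k (β s x), β (k * s) x) ∈ V := fun x k hk s => by
    rw [hβact]
    exact hβclose k hk (β s x)
  choose h hh using fun x => htrace (fun s => β s x) (hpseudo x)
  have hcomm := semiconj_of_tracingUnique α β hαact hβact huniq hh
  have hcont := continuous_of_tracingUnique α β hUclosed hαcont hβcont huniq hh
  exact ⟨h, fun y => surjective_of_semiconj_of_dense_orbit α β hcont hcomm y (hmin (h y)) y,
    hcont, hcomm⟩
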